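/- arXiv:2108.04399 — 2 statements merged into one kernel-verified Lean document; each statement's English description precedes it below -/
import Mathlib

section
/- Let Δ ≥ 4, 3 ≤ n₁ ≤ Δ−1, with n₁ + (Δ−2) odd. Let G be obtained from a 2-regular graph H₁ on n₁ vertices and a (Δ−1−n₁)-regular graph H₂ on Δ−2 vertices by adding all edges between V(H₁) and V(H₂). Then G is overfull, i.e., |E(G)| > Δ·⌊|V(G)|/2⌋. -/
open SimpleGraph

/-- A proper edge `k`-coloring of `G` with colors in `[1, k]`. -/
def IsProperEdgeColoring {V : Type*} (G : SimpleGraph V) (k : ℕ) (c : Sym2 V → ℕ) : Prop :=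
  (∀ e ∈ G.edgeSet, c e ∈ Finset.Icc 1 k) ∧
  ∀ e ∈ G.edgeSet, ∀ f ∈ G.edgeSet, e ≠ f → (∃ v : V, v ∈ e ∧ v ∈ f) → c e ≠ c f

/-- `G` has a proper edge coloring with `k` colors. -/
def EdgeColorable {V : Type*} (G : SimpleGraph V) (k : ℕ) : Prop :=
  ∃ c : Sym2 V → ℕ, IsProperEdgeColoring G k c

/-- The set of colors of `[1, k]` missing at `v`. -/
def missingColors {V : Type*} (G : SimpleGraph V) (k : ℕ) (c : Sym2 V → ℕ) (v : V) : Set ℕ :=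
  {α | α ∈ Finset.Icc 1 k ∧ ¬ ∃ e ∈ G.edgeSet, v ∈ e ∧ c e = α}

/-- The subgraph of `G` consisting of the edges colored `α` or `β`;
its components are the `(α, β)`-chains. -/
def chainGraph {V : Type*} (G : SimpleGraph V) (c : Sym2 V → ℕ) (α β : ℕ) : SimpleGraph V :=
  SimpleGraph.fromEdgeSet {e ∈ G.edgeSet | c e = α ∨ c e = β}

/-- The join of two graphs on disjoint vertex sets: the disjoint union of `H₁` and `H₂`
together with all edges between `V(H₁)` and `V(H₂)`. -/
def joinGraph {V₁ V₂ : Type*} (H₁ : SimpleGraph V₁) (H₂ : SimpleGraph V₂) :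
    SimpleGraph (V₁ ⊕ V₂) where
  Adj x y :=
    (∃ a b, x = Sum.inl a ∧ y = Sum.inl b ∧ H₁.Adj a b) ∨
    (∃ a b, x = Sum.inr a ∧ y = Sum.inr b ∧ H₂.Adj a b) ∨
    (∃ a b, x = Sum.inl a ∧ y = Sum.inr b) ∨
    (∃ a b, x = Sum.inr a ∧ y = Sum.inl b)
  symm := by
    constructor
    rintro x y (⟨a, b, hx, hy, h⟩ | ⟨a, b, hx, hy, h⟩ | ⟨a, b, hx, hy⟩ | ⟨a, b, hx, hy⟩)
    · exact Or.inl ⟨b, a, hy, hx, h.symm⟩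
    · exact Or.inr (Or.inl ⟨b, a, hy, hx, h.symm⟩)
    · exact Or.inr (Or.inr (Or.inr ⟨b, a, hy, hx⟩))
    · exact Or.inr (Or.inr (Or.inl ⟨b, a, hy, hx⟩))
  loopless := by
    constructor
    rintro x (⟨a, b, hx, hy, h⟩ | ⟨a, b, hx, hy, h⟩ | ⟨a, b, hx, hy⟩ | ⟨a, b, hx, hy⟩) <;>
      subst hx <;> simp_all

/-!
In the join, vertices of `H₁` have degree `2 + (Δ - 2) = Δ` and vertices of `H₂` have degree
`n₁ + (Δ - 1 - n₁) = Δ - 1`, so by the handshake lemma `2 |E(G)| = n₁ Δ + (Δ - 2)(Δ - 1)`.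
Since `|V(G)| = n₁ + Δ - 2` is odd, `2 Δ ⌊|V(G)|/2⌋ = Δ (n₁ + Δ - 3)`, which is exactly `2` less.
-/

open Finset

section Join

variable {V₁ V₂ : Type*} (H₁ : SimpleGraph V₁) (H₂ : SimpleGraph V₂)

@[simp]
theorem joinGraph_adj_inl_inl (a b : V₁) :
    (joinGraph H₁ H₂).Adj (Sum.inl a) (Sum.inl b) ↔ H₁.Adj a b := by
  simp [joinGraph]

@[simp]
theorem joinGraph_adj_inr_inr (a b : V₂) :
    (joinGraph H₁ H₂).Adj (Sum.inr a) (Sum.inr b) ↔ H₂.Adj a b := by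
  simp [joinGraph]

@[simp]
theorem joinGraph_adj_inl_inr (a : V₁) (b : V₂) :
    (joinGraph H₁ H₂).Adj (Sum.inl a) (Sum.inr b) := by
  simp [joinGraph]

@[simp]
theorem joinGraph_adj_inr_inl (a : V₂) (b : V₁) :
    (joinGraph H₁ H₂).Adj (Sum.inr a) (Sum.inl b) := by
  simp [joinGraph]

variable [Fintype V₁] [Fintype V₂] [DecidableRel (joinGraph H₁ H₂).Adj]

theorem neighborFinset_joinGraph_inl [DecidableRel H₁.Adj] (a : V₁) :
    (joinGraph H₁ H₂).neighborFinset (Sum.inl a) = (H₁.neighborFinset a).disjSum univ := by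
  ext (b | b) <;> simp

theorem neighborFinset_joinGraph_inr [DecidableRel H₂.Adj] (b : V₂) :
    (joinGraph H₁ H₂).neighborFinset (Sum.inr b) = univ.disjSum (H₂.neighborFinset b) := by
  ext (a | a) <;> simp

theorem degree_joinGraph_inl [DecidableRel H₁.Adj] (a : V₁) :
    (joinGraph H₁ H₂).degree (Sum.inl a) = H₁.degree a + Fintype.card V₂ := by
  rw [← card_neighborFinset_eq_degree, neighborFinset_joinGraph_inl, card_disjSum,
    card_neighborFinset_eq_degree, card_univ]

theorem degree_joinGraph_inr [DecidableRel H₂.Adj] (b : V₂) :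
    (joinGraph H₁ H₂).degree (Sum.inr b) = Fintype.card V₁ + H₂.degree b := by
  rw [← card_neighborFinset_eq_degree, neighborFinset_joinGraph_inr, card_disjSum,
    card_neighborFinset_eq_degree, card_univ]

variable {H₁ H₂} in
theorem two_mul_card_edgeFinset_joinGraph_of_isRegular [DecidableRel H₁.Adj] [DecidableRel H₂.Adj]
    {d₁ d₂ : ℕ} (hr₁ : H₁.IsRegularOfDegree d₁) (hr₂ : H₂.IsRegularOfDegree d₂) :
    2 * #(joinGraph H₁ H₂).edgeFinset =
      Fintype.card V₁ * (d₁ + Fintype.card V₂) + Fintype.card V₂ * (Fintype.card V₁ + d₂) := by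
  rw [← sum_degrees_eq_twice_card_edges, Fintype.sum_sum_type]
  simp only [degree_joinGraph_inl, degree_joinGraph_inr, hr₁.degree_eq, hr₂.degree_eq, sum_const,
    card_univ, smul_eq_mul]

end Join

open Classical in
theorem stmt_4_general {V₁ V₂ : Type*} [Fintype V₁] [Fintype V₂]
    (Δ n₁ : ℕ) (hn₁' : n₁ ≤ Δ - 1)
    (hodd : Odd (n₁ + (Δ - 2)))
    (H₁ : SimpleGraph V₁) (H₂ : SimpleGraph V₂)
    (hc₁ : Fintype.card V₁ = n₁) (hc₂ : Fintype.card V₂ = Δ - 2)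
    (hr₁ : H₁.IsRegularOfDegree 2) (hr₂ : H₂.IsRegularOfDegree (Δ - 1 - n₁)) :
    Δ * (Fintype.card (V₁ ⊕ V₂) / 2) < (joinGraph H₁ H₂).edgeFinset.card := by
  obtain ⟨k, hk⟩ := hodd
  -- `Δ ≤ 1` would make `n₁ + (Δ - 2) = 0` even.
  obtain ⟨b, rfl⟩ : ∃ b, Δ = b + 2 := ⟨Δ - 2, by omega⟩
  have hE := two_mul_card_edgeFinset_joinGraph_of_isRegular hr₁ hr₂
  rw [hc₁, hc₂, show n₁ + (b + 2 - 1 - n₁) = b + 1 by omega, Nat.add_sub_cancel] at hE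
  rw [Fintype.card_sum, hc₁, hc₂, hk, Nat.mul_add_div two_pos, Nat.div_eq_of_lt one_lt_two,
    add_zero]
  rw [Nat.add_sub_cancel] at hk
  nlinarith

open Classical in
theorem stmt_4 {V₁ V₂ : Type*} [Fintype V₁] [Fintype V₂]
    (Δ n₁ : ℕ) (hΔ : 4 ≤ Δ) (hn₁ : 3 ≤ n₁) (hn₁' : n₁ ≤ Δ - 1)
    (hodd : Odd (n₁ + (Δ - 2)))
    (H₁ : SimpleGraph V₁) (H₂ : SimpleGraph V₂)
    (hc₁ : Fintype.card V₁ = n₁) (hc₂ : Fintype.card V₂ = Δ - 2)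
    (hr₁ : H₁.IsRegularOfDegree 2) (hr₂ : H₂.IsRegularOfDegree (Δ - 1 - n₁)) :
    Δ * (Fintype.card (V₁ ⊕ V₂) / 2) < (joinGraph H₁ H₂).edgeFinset.card :=
  stmt_4_general Δ n₁ hn₁' hodd H₁ H₂ hc₁ hc₂ hr₁ hr₂
end

section
/- If G is an HZ-graph with maximum degree Δ (a connected class 2 simple graph with Δ(G_Δ) ≤ 2), then the subgraph G_Δ induced on the vertices of degree Δ is 2-regular. -/
open SimpleGraph

/-!
Let `k = Δ(G)` and let `H ≤ G` be `k`-edge-critical. Vizing's adjacency lemma for `H`, proved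
with Vizing fans and Kempe chains, says that for every edge `xy` of `H` the vertex `x` has at least
`k + 1 - d_H(y)` neighbors `z ≠ y` with `d_H(z) = k`. Such `z` have degree `k` in `G`, hence at
most two neighbors of degree `k` in `G`; applied at such a `z`, the lemma forces every vertex
meeting an edge of `H` to keep all its `G`-edges in `H`. By connectivity every vertex meets an edge
of `H`, and the lemma at any vertex then provides two neighbors of degree `k`.
-/

open Finset

section Degree

variable {V : Type*} [Fintype V] {G : SimpleGraph V} [DecidableRel G.Adj]

lemma degree_induce_eq_card_filter [DecidableEq V] (s : Set V) [DecidablePred (· ∈ s)] (v : s) :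
    (G.induce s).degree v = #{w ∈ G.neighborFinset v | w ∈ s} := by
  rw [← card_neighborFinset_eq_degree, ← card_map (.subtype (· ∈ s)), map_neighborFinset_induce]
  congr 1
  ext w
  simp

theorem SimpleGraph.Connected.card_filter_degree_le_one_le_two (hG : G.Connected)
    (hdeg : ∀ v, G.degree v ≤ 2) : #{v | G.degree v ≤ 1} ≤ 2 := by
  have hedges := hG.card_vert_le_card_edgeSet_add_one
  rw [Nat.card_eq_fintype_card, Nat.card_eq_fintype_card, ← edgeFinset_card] at hedges
  have hsum : ∑ v, (G.degree v + if G.degree v ≤ 1 then 1 else 0) ≤ ∑ _v : V, 2 :=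
    sum_le_sum fun v _ => by have := hdeg v; split_ifs <;> omega
  rw [sum_add_distrib, ← card_filter, sum_const, card_univ, smul_eq_mul,
    sum_degrees_eq_twice_card_edges] at hsum
  omega

lemma eq_of_reachable_of_degree_le_one (hdeg : ∀ v, G.degree v ≤ 2) {a b c : V}
    (ha : G.degree a ≤ 1) (hb : G.degree b ≤ 1) (hc : G.degree c ≤ 1)
    (hab : G.Reachable a b) (hac : G.Reachable a c) (hab' : a ≠ b) (hac' : a ≠ c) : b = c := by
  classical
  set C := G.connectedComponentMk a
  have hC : (G.induce C.supp).Connected := C.connected_toSimpleGraph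
  have hmem : ∀ {v}, G.Reachable a v → v ∈ C.supp := fun h => (ConnectedComponent.sound h).symm
  have hdegC : ∀ v (hv : v ∈ C.supp), (G.induce C.supp).degree ⟨v, hv⟩ = G.degree v :=
    fun v hv => degree_induce_of_neighborSet_subset fun w hw => (C.mem_supp_congr_adj hw).mp hv
  have hends := hC.card_filter_degree_le_one_le_two fun v => (hdegC v v.2).trans_le (hdeg v)
  by_contra hbc
  have hsub : ({⟨a, hmem .rfl⟩, ⟨b, hmem hab⟩, ⟨c, hmem hac⟩} : Finset C.supp) ⊆
      ({v | (G.induce C.supp).degree v ≤ 1} : Finset C.supp) := by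
    simp [insert_subset_iff, hdegC, ha, hb, hc]
  have := card_le_card hsub
  rw [card_eq_three.mpr ⟨_, _, _, by simpa using hab', by simpa using hac', by simpa using hbc,
    rfl⟩] at this
  omega

end Degree

section DeleteEdges

open scoped Classical

variable {V : Type*} [Fintype V] {H : SimpleGraph V} {v x y : V}

lemma degree_deleteEdges_add_one (hxy : H.Adj x y) :
    (H.deleteEdges {s(x, y)}).degree x + 1 = H.degree x := by
  have : (H.deleteEdges {s(x, y)}).neighborFinset x = (H.neighborFinset x).erase y := by
    ext z
    simp only [mem_neighborFinset, deleteEdges_adj, Set.mem_singleton_iff, mem_erase]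
    simp [hxy.ne, eq_comm, and_comm]
  rw [← card_neighborFinset_eq_degree, this, card_erase_add_one (by simpa using hxy),
    card_neighborFinset_eq_degree]

lemma degree_deleteEdges_of_notMem (hv : v ∉ s(x, y)) :
    (H.deleteEdges {s(x, y)}).degree v = H.degree v := by
  have : (H.deleteEdges {s(x, y)}).neighborFinset v = H.neighborFinset v := by
    ext z
    simp only [mem_neighborFinset, deleteEdges_adj, Set.mem_singleton_iff, and_iff_left_iff_imp]
    rintro - h
    exact hv (h ▸ Sym2.mem_mk_left v z)
  rw [← card_neighborFinset_eq_degree, this, card_neighborFinset_eq_degree]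

end DeleteEdges

section Coloring

open scoped Classical

variable {V : Type*} {G H : SimpleGraph V} {k : ℕ} {c : Sym2 V → ℕ} {v w x y z : V}
  {e f : Sym2 V} {γ : ℕ}

lemma mem_missingColors :
    γ ∈ missingColors G k c v ↔ γ ∈ Icc 1 k ∧ ∀ e ∈ G.edgeSet, v ∈ e → c e ≠ γ := by
  simp [missingColors]

lemma missingColors_anti (h : H ≤ G) : missingColors G k c v ⊆ missingColors H k c v :=
  fun _ hγ => ⟨hγ.1, fun ⟨e, he, hv, hc⟩ => hγ.2 ⟨e, edgeSet_mono h he, hv, hc⟩⟩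

namespace IsProperEdgeColoring

lemma mono (hp : IsProperEdgeColoring G k c) (hle : H ≤ G) : IsProperEdgeColoring H k c :=
  ⟨fun e he => hp.1 e (edgeSet_mono hle he),
    fun e he f hf => hp.2 e (edgeSet_mono hle he) f (edgeSet_mono hle hf)⟩

lemma eq_of_color_eq (hp : IsProperEdgeColoring G k c) (he : e ∈ G.edgeSet) (hf : f ∈ G.edgeSet)
    (hve : v ∈ e) (hvf : v ∈ f) (hc : c e = c f) : e = f :=
  by_contra fun hne => hp.2 e he f hf hne ⟨v, hve, hvf⟩ hc

lemma eq_of_adj_of_color_eq (hp : IsProperEdgeColoring G k c) (hw : G.Adj v w) (hz : G.Adj v z)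
    (hc : c s(v, w) = c s(v, z)) : w = z :=
  Sym2.congr_right.mp (hp.eq_of_color_eq hw hz (Sym2.mem_mk_left _ _) (Sym2.mem_mk_left _ _) hc)

lemma update_of_mem_missingColors (hp : IsProperEdgeColoring (H.deleteEdges {s(x, y)}) k c)
    (hx : γ ∈ missingColors (H.deleteEdges {s(x, y)}) k c x)
    (hy : γ ∈ missingColors (H.deleteEdges {s(x, y)}) k c y) :
    IsProperEdgeColoring H k (Function.update c s(x, y) γ) := by
  have mem_del : ∀ e ∈ H.edgeSet, e ≠ s(x, y) → e ∈ (H.deleteEdges {s(x, y)}).edgeSet :=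
    fun e he hne => by simp [he, hne]
  have miss : ∀ v ∈ s(x, y), ∀ f ∈ (H.deleteEdges {s(x, y)}).edgeSet, v ∈ f → c f ≠ γ := by
    intro v hv f hf hvf
    rcases Sym2.mem_iff.mp hv with rfl | rfl
    exacts [(mem_missingColors.mp hx).2 f hf hvf, (mem_missingColors.mp hy).2 f hf hvf]
  refine ⟨fun e he => ?_, fun e he f hf hef ⟨v, hve, hvf⟩ => ?_⟩
  · rcases eq_or_ne e s(x, y) with rfl | he'
    · simpa using hx.1
    · simpa [he'] using hp.1 e (mem_del e he he')
  rcases eq_or_ne e s(x, y) with rfl | he' <;> rcases eq_or_ne f s(x, y) with rfl | hf'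
  · exact absurd rfl hef
  · simpa [hf'] using (miss v hve f (mem_del f hf hf') hvf).symm
  · simpa [he'] using miss v hvf e (mem_del e he he') hve
  · simpa [he', hf'] using hp.2 e (mem_del e he he') f (mem_del f hf hf') hef ⟨v, hve, hvf⟩

/-- One rotation step of a Vizing fan. -/
lemma shift (hp : IsProperEdgeColoring (H.deleteEdges {s(x, y)}) k c) (hxw : H.Adj x w)
    (hyw : y ≠ w) (hδ : c s(x, w) ∈ missingColors (H.deleteEdges {s(x, y)}) k c y) :
    IsProperEdgeColoring (H.deleteEdges {s(x, w)}) k (Function.update c s(x, y) (c s(x, w))) := by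
  have hxw' : s(x, w) ∈ (H.deleteEdges {s(x, y)}).edgeSet := by simp [hxw, hyw.symm, hxw.ne.symm]
  have hle : (H.deleteEdges {s(x, w)}).deleteEdges {s(x, y)} ≤ H.deleteEdges {s(x, y)} := by
    rw [deleteEdges_deleteEdges]; exact deleteEdges_anti (by simp)
  refine (hp.mono hle).update_of_mem_missingColors ⟨hδ.1, ?_⟩ (missingColors_anti hle hδ)
  rintro ⟨e, he, hxe, hce⟩
  rw [deleteEdges_deleteEdges] at he
  have hexw : e ≠ s(x, w) := by rintro rfl; simp at he
  exact hexw (hp.eq_of_color_eq (edgeSet_mono hle (by simpa using he)) hxw' hxe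
    (Sym2.mem_mk_left _ _) hce)

end IsProperEdgeColoring

lemma mem_missingColors_shift (hxw : H.Adj x w) (hyw : y ≠ w) (hv : v ≠ y)
    (hγ : γ ∈ missingColors (H.deleteEdges {s(x, y)}) k c v) :
    γ ∈ missingColors (H.deleteEdges {s(x, w)}) k (Function.update c s(x, y) (c s(x, w))) v := by
  refine ⟨hγ.1, ?_⟩
  rintro ⟨e, he, hve, hce⟩
  rcases eq_or_ne e s(x, y) with rfl | hexy
  · obtain rfl : v = x := by simpa [hv] using hve
    exact hγ.2 ⟨s(v, w), by simp [hxw, hyw.symm, hxw.ne.symm], Sym2.mem_mk_left _ _,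
      by simpa using hce⟩
  · exact hγ.2 ⟨e, by simp_all, hve, by simpa [hexy] using hce⟩

noncomputable def missingFinset (G : SimpleGraph V) (k : ℕ) (c : Sym2 V → ℕ) (v : V) :
    Finset ℕ :=
  {γ ∈ Icc 1 k | γ ∈ missingColors G k c v}

lemma coe_missingFinset {G : SimpleGraph V} :
    (missingFinset G k c v : Set ℕ) = missingColors G k c v := by
  ext γ
  rw [mem_coe, missingFinset, mem_filter]
  exact and_iff_right_of_imp fun h => h.1

variable [Fintype V]

lemma card_missingFinset {G : SimpleGraph V} [DecidableRel G.Adj]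
    (hp : IsProperEdgeColoring G k c) : #(missingFinset G k c v) = k - G.degree v := by
  have hdiff :
      missingFinset G k c v = Icc 1 k \ (G.neighborFinset v).image (fun w => c s(v, w)) := by
    ext γ
    rw [← mem_coe, coe_missingFinset, mem_missingColors]
    simp only [mem_sdiff, mem_image, mem_neighborFinset, not_exists, not_and]
    refine and_congr_right fun _ =>
      ⟨fun h w hw => h _ hw (Sym2.mem_mk_left _ _), fun h e he hve => ?_⟩
    obtain ⟨w, rfl⟩ := Sym2.mem_iff_exists.mp hve
    exact h w he
  have hsub : (G.neighborFinset v).image (fun w => c s(v, w)) ⊆ Icc 1 k := by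
    intro γ hγ
    obtain ⟨w, hw, rfl⟩ := mem_image.mp hγ
    exact hp.1 _ (by simpa using hw)
  rw [hdiff, card_sdiff_of_subset hsub, Nat.card_Icc, card_image_of_injOn,
    card_neighborFinset_eq_degree, Nat.add_sub_cancel]
  intro w hw z hz hc
  exact hp.eq_of_adj_of_color_eq (by simpa using hw) (by simpa using hz) hc

lemma nonempty_missingColors {G : SimpleGraph V} [DecidableRel G.Adj]
    (hp : IsProperEdgeColoring G k c) (hv : G.degree v < k) : (missingColors G k c v).Nonempty := by
  rw [← coe_missingFinset, coe_nonempty, ← card_pos, card_missingFinset hp]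
  omega

end Coloring

section Kempe

open scoped Classical

variable {V : Type*} {Γ : SimpleGraph V} {k : ℕ} {c : Sym2 V → ℕ} {u v w z : V} {e : Sym2 V}
  {α β γ : ℕ} {W : Set V}

lemma chainGraph_adj :
    (chainGraph Γ c α β).Adj u w ↔ Γ.Adj u w ∧ (c s(u, w) = α ∨ c s(u, w) = β) := by
  simp only [chainGraph, fromEdgeSet_adj, Set.mem_ofPred_eq, mem_edgeSet]
  exact ⟨fun h => h.1, fun h => ⟨h, h.1.ne⟩⟩

lemma chainGraph_comm : chainGraph Γ c α β = chainGraph Γ c β α := by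
  ext; simp only [chainGraph_adj, or_comm]

section ChainDegree

variable [Fintype V]

lemma degree_chainGraph_le_card (hp : IsProperEdgeColoring Γ k c) (s : Finset ℕ)
    (hs : ∀ w, (chainGraph Γ c α β).Adj v w → c s(v, w) ∈ s) :
    (chainGraph Γ c α β).degree v ≤ #s := by
  rw [← card_neighborFinset_eq_degree]
  refine card_le_card_of_injOn (fun w => c s(v, w)) (fun w hw => hs w (by simpa using hw)) ?_
  intro w₁ h₁ w₂ h₂ h
  simp only [coe_neighborFinset, mem_neighborSet, chainGraph_adj] at h₁ h₂
  exact hp.eq_of_adj_of_color_eq h₁.1 h₂.1 h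

lemma degree_chainGraph_le_two (hp : IsProperEdgeColoring Γ k c) :
    (chainGraph Γ c α β).degree v ≤ 2 :=
  (degree_chainGraph_le_card hp {α, β} fun _ hw => by
    rcases (chainGraph_adj.mp hw).2 with h | h <;> simp [h]).trans card_le_two

lemma degree_chainGraph_le_one (hp : IsProperEdgeColoring Γ k c)
    (hα : α ∈ missingColors Γ k c v) : (chainGraph Γ c α β).degree v ≤ 1 := by
  refine (degree_chainGraph_le_card hp {β} fun w hw => ?_).trans (card_singleton β).le
  obtain ⟨hvw, h | h⟩ := chainGraph_adj.mp hw
  · exact absurd h ((mem_missingColors.mp hα).2 _ hvw (Sym2.mem_mk_left _ _))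
  · simp [h]

end ChainDegree

/-- When `W` is a union of `(α, β)`-chains, this is the Kempe change along them. -/
noncomputable def kempeSwap (c : Sym2 V → ℕ) (α β : ℕ) (W : Set V) (e : Sym2 V) : ℕ :=
  if ∀ v ∈ e, v ∈ W then Equiv.swap α β (c e) else c e

lemma kempeSwap_of_notMem (hz : z ∈ e) (hzW : z ∉ W) : kempeSwap c α β W e = c e :=
  if_neg fun h => hzW (h z hz)

lemma kempeSwap_of_mem (hW : ∀ ⦃u w⦄, (chainGraph Γ c α β).Adj u w → u ∈ W → w ∈ W)
    (he : e ∈ Γ.edgeSet) (hz : z ∈ e) (hzW : z ∈ W) :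
    kempeSwap c α β W e = Equiv.swap α β (c e) := by
  obtain ⟨u, rfl⟩ := Sym2.mem_iff_exists.mp hz
  unfold kempeSwap
  split_ifs with h
  · rfl
  have huW : u ∉ W := by simpa [hzW] using h
  have hchain : c s(z, u) ≠ α ∧ c s(z, u) ≠ β := by
    constructor <;> intro hc <;> exact huW (hW (chainGraph_adj.mpr ⟨he, by simp [hc]⟩) hzW)
  rw [Equiv.swap_apply_of_ne_of_ne hchain.1 hchain.2]

lemma IsProperEdgeColoring.kempeSwap (hp : IsProperEdgeColoring Γ k c) (hα : α ∈ Icc 1 k)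
    (hβ : β ∈ Icc 1 k) (hW : ∀ ⦃u w⦄, (chainGraph Γ c α β).Adj u w → u ∈ W → w ∈ W) :
    IsProperEdgeColoring Γ k (kempeSwap c α β W) := by
  refine ⟨fun e he => ?_, fun e he f hf hef ⟨v, hve, hvf⟩ => ?_⟩
  · unfold _root_.kempeSwap
    split_ifs
    · rw [Equiv.swap_apply_def]
      split_ifs
      exacts [hβ, hα, hp.1 e he]
    · exact hp.1 e he
  by_cases hv : v ∈ W
  · rw [kempeSwap_of_mem hW he hve hv, kempeSwap_of_mem hW hf hvf hv,
      (Equiv.swap α β).injective.ne_iff]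
    exact hp.2 e he f hf hef ⟨v, hve, hvf⟩
  · rw [kempeSwap_of_notMem hve hv, kempeSwap_of_notMem hvf hv]
    exact hp.2 e he f hf hef ⟨v, hve, hvf⟩

lemma missingColors_kempeSwap_of_notMem (hzW : z ∉ W) :
    missingColors Γ k (kempeSwap c α β W) z = missingColors Γ k c z := by
  ext γ
  simp +contextual only [mem_missingColors, kempeSwap_of_notMem _ hzW]

lemma mem_missingColors_kempeSwap_of_mem (hα : α ∈ Icc 1 k) (hβ : β ∈ Icc 1 k)
    (hW : ∀ ⦃u w⦄, (chainGraph Γ c α β).Adj u w → u ∈ W → w ∈ W) (hzW : z ∈ W) :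
    γ ∈ missingColors Γ k (kempeSwap c α β W) z ↔ Equiv.swap α β γ ∈ missingColors Γ k c z := by
  have hIcc : Equiv.swap α β γ ∈ Icc 1 k ↔ γ ∈ Icc 1 k := by
    rw [Equiv.swap_apply_def]
    split_ifs with h₁ h₂ <;> simp_all
  simp +contextual only [mem_missingColors, hIcc, kempeSwap_of_mem hW _ _ hzW, ne_eq,
    Equiv.swap_apply_eq_iff]

end Kempe

section Fan

open scoped Classical

variable {V : Type*} {H : SimpleGraph V} {k : ℕ} {c : Sym2 V → ℕ} {x y v w : V} {F : ℕ → V}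
  {m n : ℕ} {γ : ℕ}

/-- A Vizing fan at `x` for a coloring of `H - xy`. -/
structure IsFan (H : SimpleGraph V) (k : ℕ) (c : Sym2 V → ℕ) (x y : V) (F : ℕ → V) (m : ℕ) :
    Prop where
  start : F 0 = y
  adj : ∀ i ≤ m, H.Adj x (F i)
  injOn : Set.InjOn F (Set.Iic m)
  missing : ∀ i < m, c s(x, F (i + 1)) ∈ missingColors (H.deleteEdges {s(x, y)}) k c (F i)

def IsFanEnd (H : SimpleGraph V) (k : ℕ) (c : Sym2 V → ℕ) (x y v : V) : Prop :=
  ∃ F m, IsFan H k c x y F m ∧ F m = v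

namespace IsFan

variable (hF : IsFan H k c x y F m)
include hF

lemma mono (h : n ≤ m) : IsFan H k c x y F n :=
  ⟨hF.start, fun i hi => hF.adj i (hi.trans h),
    hF.injOn.mono (Set.Iic_subset_Iic.mpr h), fun i hi => hF.missing i (hi.trans_le h)⟩

lemma ne_start {i : ℕ} (hi : i ≤ m) (hi0 : i ≠ 0) : F i ≠ y := fun h =>
  hi0 (hF.injOn (Set.mem_Iic.mpr hi) (Set.mem_Iic.mpr (Nat.zero_le m)) (h.trans hF.start.symm))

lemma mem_edgeSet {i : ℕ} (hi : i ≤ m) (hi0 : i ≠ 0) :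
    s(x, F i) ∈ (H.deleteEdges {s(x, y)}).edgeSet := by
  simp [hF.adj i hi, hF.ne_start hi hi0, (hF.adj i hi).ne.symm]

lemma snoc (hxw : H.Adj x w) (hw : ∀ i ≤ m, F i ≠ w)
    (hmiss : c s(x, w) ∈ missingColors (H.deleteEdges {s(x, y)}) k c (F m)) :
    IsFan H k c x y (Function.update F (m + 1) w) (m + 1) := by
  have hF' : ∀ i ≤ m, Function.update F (m + 1) w i = F i :=
    fun i hi => Function.update_of_ne (by omega) _ _
  refine ⟨by rw [hF' 0 (Nat.zero_le m), hF.start], fun i hi => ?_, ?_, fun i hi => ?_⟩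
  · rcases Nat.lt_succ_iff_lt_or_eq.mp (Nat.lt_succ_of_le hi) with hi | rfl
    · rw [hF' i (by omega)]; exact hF.adj i (by omega)
    · rwa [Function.update_self]
  · intro i hi j hj hij
    simp only [Set.mem_Iic] at hi hj
    rcases Nat.lt_succ_iff_lt_or_eq.mp (Nat.lt_succ_of_le hi) with hi | rfl <;>
      rcases Nat.lt_succ_iff_lt_or_eq.mp (Nat.lt_succ_of_le hj) with hj | rfl
    · rw [hF' i (by omega), hF' j (by omega)] at hij
      exact hF.injOn (Set.mem_Iic.mpr (by omega)) (Set.mem_Iic.mpr (by omega)) hij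
    · rw [hF' i (by omega), Function.update_self] at hij; exact absurd hij (hw i (by omega))
    · rw [hF' j (by omega), Function.update_self] at hij; exact absurd hij.symm (hw j (by omega))
    · rfl
  · rcases Nat.lt_succ_iff_lt_or_eq.mp hi with hi | rfl
    · rw [hF' (i + 1) (by omega), hF' i hi.le]; exact hF.missing i hi
    · rwa [Function.update_self, hF' i le_rfl]

/-- Rotate the fan with `IsProperEdgeColoring.shift` until `x F m` is the uncolored edge; a color
missing at both its ends then colors it. -/
theorem notMem_missingColors_last (hnc : ¬ EdgeColorable H k)
    (hp : IsProperEdgeColoring (H.deleteEdges {s(x, y)}) k c)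
    (hx : γ ∈ missingColors (H.deleteEdges {s(x, y)}) k c x) :
    γ ∉ missingColors (H.deleteEdges {s(x, y)}) k c (F m) := by
  induction m generalizing y c F with
  | zero =>
    intro hγ
    rw [hF.start] at hγ
    exact hnc ⟨_, hp.update_of_mem_missingColors hx hγ⟩
  | succ m ih =>
    intro hγ
    have hy1 : y ≠ F 1 := (hF.ne_start (by omega) one_ne_zero).symm
    have hxw : H.Adj x (F 1) := hF.adj 1 (by omega)
    have hxy : x ≠ y := hF.start ▸ (hF.adj 0 (Nat.zero_le _)).ne
    have hδ := hF.missing 0 (Nat.succ_pos m)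
    rw [hF.start] at hδ
    have hF1 :
        IsFan H k (Function.update c s(x, y) (c s(x, F 1))) x (F 1) (fun i => F (i + 1)) m := by
      refine ⟨rfl, fun i hi => hF.adj _ (by omega), fun i hi j hj hij => ?_, fun i hi => ?_⟩
      · simp only [Set.mem_Iic] at hi hj
        exact Nat.succ_injective
          (hF.injOn (Set.mem_Iic.mpr (by omega)) (Set.mem_Iic.mpr (by omega)) hij)
      · have hne : s(x, F (i + 1 + 1)) ≠ s(x, y) := fun h =>
          hF.ne_start (i := i + 2) (by omega) (by omega) (Sym2.congr_right.mp h)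
        rw [Function.update_of_ne hne]
        exact mem_missingColors_shift hxw hy1 (hF.ne_start (by omega) (by omega))
          (hF.missing (i + 1) (by omega))
    exact ih hF1 (hp.shift hxw hy1 hδ) (mem_missingColors_shift hxw hy1 hxy hx)
      (mem_missingColors_shift hxw hy1 (hF.ne_start le_rfl (by omega)) hγ)

end IsFan

theorem IsFanEnd.adj (h : IsFanEnd H k c x y v) : H.Adj x v := by
  obtain ⟨F, m, hF, rfl⟩ := h
  exact hF.adj m le_rfl

lemma isFanEnd_start (hxy : H.Adj x y) : IsFanEnd H k c x y y :=
  ⟨fun _ => y, 0, ⟨rfl, fun _ _ => hxy, fun i hi j hj _ => by simp_all, by simp⟩, rfl⟩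

end Fan

section Vizing

open scoped Classical

variable {V : Type*} {H : SimpleGraph V} {k : ℕ} {c : Sym2 V → ℕ} {x y : V} {F : ℕ → V} {m : ℕ}
  {α β γ : ℕ}

/-- If not, swap the `(α, β)`-chain at `F m`. Unless it contains some `F i` with `x F(i+1)`
colored `β` (then induct on `i`), the fan survives and `α` becomes missing at `x` and `F m`. -/
theorem IsFan.reachable_chainGraph (hF : IsFan H k c x y F m) (hnc : ¬ EdgeColorable H k)
    (hp : IsProperEdgeColoring (H.deleteEdges {s(x, y)}) k c)
    (hα : α ∈ missingColors (H.deleteEdges {s(x, y)}) k c x)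
    (hβ : β ∈ missingColors (H.deleteEdges {s(x, y)}) k c (F m)) :
    (chainGraph (H.deleteEdges {s(x, y)}) c α β).Reachable x (F m) := by
  induction m using Nat.strong_induction_on with
  | _ m ih =>
  by_contra hxm
  set W := {z | (chainGraph (H.deleteEdges {s(x, y)}) c α β).Reachable (F m) z}
  have hW : ∀ ⦃u w⦄, (chainGraph (H.deleteEdges {s(x, y)}) c α β).Adj u w → u ∈ W → w ∈ W :=
    fun _ _ huw hu => hu.trans huw.reachable
  have hxW : x ∉ W := fun h => hxm h.symm
  by_cases hβchain : ∃ i < m, F i ∈ W ∧ c s(x, F (i + 1)) = β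
  · obtain ⟨i, him, hiW, hci⟩ := hβchain
    exact hxm ((ih i him (hF.mono him.le) (hci ▸ hF.missing i him)).trans hiW.symm)
  push Not at hβchain
  have hF' : IsFan H k (kempeSwap c α β W) x y F m := by
    refine ⟨hF.start, hF.adj, hF.injOn, fun i hi => ?_⟩
    rw [kempeSwap_of_notMem (Sym2.mem_mk_left _ _) hxW]
    by_cases hiW : F i ∈ W
    · have hα' : c s(x, F (i + 1)) ≠ α := (mem_missingColors.mp hα).2 _
        (hF.mem_edgeSet (by omega) (by omega)) (Sym2.mem_mk_left _ _)
      rw [mem_missingColors_kempeSwap_of_mem hα.1 hβ.1 hW hiW,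
        Equiv.swap_apply_of_ne_of_ne hα' (hβchain i hi hiW)]
      exact hF.missing i hi
    · rw [missingColors_kempeSwap_of_notMem hiW]
      exact hF.missing i hi
  refine hF'.notMem_missingColors_last hnc (hp.kempeSwap hα.1 hβ.1 hW)
    (by rwa [missingColors_kempeSwap_of_notMem hxW]) ?_
  rw [mem_missingColors_kempeSwap_of_mem hα.1 hβ.1 hW (Reachable.refl _), Equiv.swap_apply_left]
  exact hβ

theorem IsFan.exists_isFanEnd (hF : IsFan H k c x y F m) (hnc : ¬ EdgeColorable H k)
    (hp : IsProperEdgeColoring (H.deleteEdges {s(x, y)}) k c)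
    (hγ : γ ∈ missingColors (H.deleteEdges {s(x, y)}) k c (F m)) :
    ∃ w, IsFanEnd H k c x y w ∧ w ≠ y ∧ c s(x, w) = γ := by
  have hγx : γ ∉ missingColors (H.deleteEdges {s(x, y)}) k c x :=
    fun h => hF.notMem_missingColors_last hnc hp h hγ
  rw [mem_missingColors] at hγx
  push Not at hγx
  obtain ⟨e, he, hxe, hce⟩ := hγx hγ.1
  obtain ⟨w, rfl⟩ := Sym2.mem_iff_exists.mp hxe
  have hxw : H.Adj x w := (deleteEdges_adj.mp he).1
  have hwy : w ≠ y := by rintro rfl; simp at he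
  by_cases hw : ∃ j ≤ m, F j = w
  · obtain ⟨j, hj, rfl⟩ := hw
    exact ⟨F j, ⟨F, j, hF.mono hj, rfl⟩, hwy, hce⟩
  push Not at hw
  exact ⟨w, ⟨_, m + 1, hF.snoc hxw hw (hce ▸ hγ), Function.update_self ..⟩, hwy, hce⟩

variable [Fintype V]

/-- Both ends are joined to `x` by `(α, β)`-chains for a color `α` missing at `x`; with `x`,
three vertices of chain-degree at most one would lie on one path or cycle. -/
theorem IsFanEnd.disjoint_missingColors (hnc : ¬ EdgeColorable H k)
    (hp : IsProperEdgeColoring (H.deleteEdges {s(x, y)}) k c)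
    (hx : (H.deleteEdges {s(x, y)}).degree x < k) {v₁ v₂ : V}
    (h₁ : IsFanEnd H k c x y v₁) (h₂ : IsFanEnd H k c x y v₂) (hne : v₁ ≠ v₂) :
    Disjoint (missingColors (H.deleteEdges {s(x, y)}) k c v₁)
      (missingColors (H.deleteEdges {s(x, y)}) k c v₂) := by
  refine Set.disjoint_left.mpr fun β hβ₁ hβ₂ => hne ?_
  obtain ⟨α, hα⟩ := nonempty_missingColors hp hx
  have hxv₁ := h₁.adj.ne
  have hxv₂ := h₂.adj.ne
  obtain ⟨F₁, m₁, hF₁, rfl⟩ := h₁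
  obtain ⟨F₂, m₂, hF₂, rfl⟩ := h₂
  have hend : ∀ v, β ∈ missingColors (H.deleteEdges {s(x, y)}) k c v →
      (chainGraph (H.deleteEdges {s(x, y)}) c α β).degree v ≤ 1 := fun v hv => by
    rw [chainGraph_comm]; exact degree_chainGraph_le_one hp hv
  exact eq_of_reachable_of_degree_le_one (fun _ => degree_chainGraph_le_two hp)
    (degree_chainGraph_le_one hp hα) (hend _ hβ₁) (hend _ hβ₂)
    (hF₁.reachable_chainGraph hnc hp hα hβ₁) (hF₂.reachable_chainGraph hnc hp hα hβ₂) hxv₁ hxv₂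

noncomputable def fanEnds (H : SimpleGraph V) (k : ℕ) (c : Sym2 V → ℕ) (x y : V) : Finset V :=
  {v | IsFanEnd H k c x y v}

@[simp]
lemma mem_fanEnds {v : V} : v ∈ fanEnds H k c x y ↔ IsFanEnd H k c x y v := by
  simp [fanEnds]

/-- Every color missing at a fan end is the color of `xw` for a fan end `w ≠ y`, and no two fan
ends miss a common color. -/
theorem sum_card_missingFinset_le (hnc : ¬ EdgeColorable H k)
    (hp : IsProperEdgeColoring (H.deleteEdges {s(x, y)}) k c)
    (hx : (H.deleteEdges {s(x, y)}).degree x < k) :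
    ∑ v ∈ fanEnds H k c x y, #(missingFinset (H.deleteEdges {s(x, y)}) k c v) ≤
      #((fanEnds H k c x y).erase y) := by
  rw [← card_biUnion fun v₁ h₁ v₂ h₂ hne => ?_]
  · refine (card_le_card fun γ hγ => ?_).trans (card_image_le (f := fun w => c s(x, w)))
    obtain ⟨v, hv, hγv⟩ := mem_biUnion.mp hγ
    obtain ⟨F, m, hF, rfl⟩ := mem_fanEnds.mp hv
    rw [← mem_coe, coe_missingFinset] at hγv
    obtain ⟨w, hw, hwy, rfl⟩ := hF.exists_isFanEnd hnc hp hγv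
    exact mem_image_of_mem _ (mem_erase.mpr ⟨hwy, mem_fanEnds.mpr hw⟩)
  · rw [Function.onFun, ← disjoint_coe, coe_missingFinset, coe_missingFinset]
    exact (mem_fanEnds.mp h₁).disjoint_missingColors hnc hp hx (mem_fanEnds.mp h₂) hne

/-- Vizing's adjacency lemma, for a `k`-coloring of `H - xy`. -/
theorem le_degree_add_card_of_coloring (hdeg : ∀ v, H.degree v ≤ k) (hnc : ¬ EdgeColorable H k)
    (hxy : H.Adj x y) (hp : IsProperEdgeColoring (H.deleteEdges {s(x, y)}) k c) :
    k + 1 ≤ H.degree y + #{z ∈ H.neighborFinset x | z ≠ y ∧ H.degree z = k} := by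
  have hdx := degree_deleteEdges_add_one hxy
  have hdy : (H.deleteEdges {s(x, y)}).degree y + 1 = H.degree y := by
    rw [Sym2.eq_swap]; exact degree_deleteEdges_add_one hxy.symm
  have hsum := sum_card_missingFinset_le hnc hp (by have := hdeg x; omega)
  rw [← sum_erase_add _ _ (mem_fanEnds.mpr (isFanEnd_start hxy)), card_missingFinset hp]
    at hsum
  set A := (fanEnds H k c x y).erase y
  have hsmall : #A ≤ ∑ v ∈ A, #(missingFinset (H.deleteEdges {s(x, y)}) k c v) +
      #{v ∈ A | H.degree v = k} := by
    rw [card_eq_sum_ones, card_filter, ← sum_add_distrib]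
    refine sum_le_sum fun v hv => ?_
    obtain ⟨hvy, hvT⟩ := mem_erase.mp hv
    have hxv : x ≠ v := (mem_fanEnds.mp hvT).adj.ne
    rw [card_missingFinset hp, degree_deleteEdges_of_notMem (by simp [hxv.symm, hvy])]
    have := hdeg v
    split_ifs <;> omega
  have hbig : #{v ∈ A | H.degree v = k} ≤ #{z ∈ H.neighborFinset x | z ≠ y ∧ H.degree z = k} := by
    refine card_le_card fun v hv => ?_
    obtain ⟨hv, hvk⟩ := mem_filter.mp hv
    obtain ⟨hvy, hvT⟩ := mem_erase.mp hv
    have hxv : H.Adj x v := (mem_fanEnds.mp hvT).adj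
    simp [hxv, hvy, hvk]
  have := hdeg y
  omega

end Vizing

section Critical

open scoped Classical

variable {V : Type*} {G H : SimpleGraph V} {k : ℕ}

def IsEdgeCritical (H : SimpleGraph V) (k : ℕ) : Prop :=
  ¬ EdgeColorable H k ∧ ∀ e ∈ H.edgeSet, EdgeColorable (H.deleteEdges {e}) k

lemma exists_isEdgeCritical_le [Finite V] (h : ¬ EdgeColorable G k) :
    ∃ H ≤ G, IsEdgeCritical H k := by
  obtain ⟨H, hHG, hH⟩ := exists_minimal_le_of_wellFoundedLT (fun H => ¬ EdgeColorable H k) G h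
  refine ⟨H, hHG, hH.prop, fun e he => by_contra fun hne => ?_⟩
  have he' : e ∈ (H.deleteEdges {e}).edgeSet := (hH.eq_of_le hne (deleteEdges_le _)).symm ▸ he
  simp at he'

lemma IsEdgeCritical.exists_adj (hH : IsEdgeCritical H k) : ∃ x y, H.Adj x y := by
  by_contra! h
  have hE : H.edgeSet = ∅ := by
    ext e
    induction e using Sym2.ind with
    | h a b => simpa using h a b
  exact hH.1 ⟨fun _ => 1, by simp [hE], by simp [hE]⟩

variable [Fintype V] {x y z a : V}

theorem IsEdgeCritical.le_degree_add_card (hH : IsEdgeCritical H k) (hdeg : ∀ v, H.degree v ≤ k)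
    (hxy : H.Adj x y) : k + 1 ≤ H.degree y + #{z ∈ H.neighborFinset x | z ≠ y ∧ H.degree z = k} :=
  let ⟨_, hp⟩ := hH.2 _ hxy
  le_degree_add_card_of_coloring hdeg hH.1 hxy hp

lemma IsEdgeCritical.exists_adj_degree_eq (hH : IsEdgeCritical H k) (hdeg : ∀ v, H.degree v ≤ k)
    (hx : x ∈ H.support) : ∃ z, H.Adj x z ∧ H.degree z = k := by
  obtain ⟨y, hxy⟩ := H.mem_support.mp hx
  have h := hH.le_degree_add_card hdeg hxy
  obtain ⟨z, hz⟩ := card_pos.mp (by have := hdeg y; omega :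
    0 < #{z ∈ H.neighborFinset x | z ≠ y ∧ H.degree z = k})
  simp only [mem_filter, mem_neighborFinset] at hz
  exact ⟨z, hz.1, hz.2.2⟩

section Subgraph

variable (hH : IsEdgeCritical H k) (hHG : H ≤ G) (hdeg : ∀ v, G.degree v ≤ k)
include hH hHG hdeg

lemma IsEdgeCritical.exists_adj_degree_eq_of_le (ha : a ∈ H.support) :
    ∃ z, H.Adj a z ∧ G.degree z = k := by
  obtain ⟨z, haz, hzk⟩ := hH.exists_adj_degree_eq (fun v => (degree_le_of_le hHG).trans (hdeg v)) ha
  exact ⟨z, haz, le_antisymm (hdeg z) (hzk ▸ degree_le_of_le hHG)⟩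

lemma IsEdgeCritical.le_degree_add_card_erase (hzy : H.Adj z y) :
    k + 1 ≤ H.degree y + #({w ∈ G.neighborFinset z | G.degree w = k}.erase y) := by
  refine (hH.le_degree_add_card (fun v => (degree_le_of_le hHG).trans (hdeg v)) hzy).trans
    (Nat.add_le_add_left (card_le_card fun w hw => ?_) _)
  simp only [mem_filter, mem_neighborFinset, mem_erase] at hw ⊢
  exact ⟨hw.2.1, hHG hw.1, le_antisymm (hdeg w) (hw.2.2 ▸ degree_le_of_le hHG)⟩

lemma IsEdgeCritical.two_le_card_filter (ha : a ∈ H.support) :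
    2 ≤ #{w ∈ G.neighborFinset a | G.degree w = k} := by
  obtain ⟨z, haz, hzk⟩ := hH.exists_adj_degree_eq_of_le hHG hdeg ha
  have h := hH.le_degree_add_card_erase hHG hdeg haz
  have hHz : H.degree z ≤ k := (degree_le_of_le hHG).trans (hdeg z)
  rw [card_erase_of_mem (by simp [hHG haz, hzk])] at h
  omega

variable (hcore : ∀ z, G.degree z = k → #{w ∈ G.neighborFinset z | G.degree w = k} ≤ 2)
include hcore

/-- At an `H`-neighbor `z` of `a` of degree `k`, which has at most two neighbors of degree `k`
in `G`, `le_degree_add_card_erase` gives `H.degree a ≥ k - 1`, and `H.degree a = k` when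
`G.degree a = k`. -/
lemma IsEdgeCritical.degree_eq_of_mem_support (ha : a ∈ H.support) : H.degree a = G.degree a := by
  obtain ⟨z, haz, hzk⟩ := hH.exists_adj_degree_eq_of_le hHG hdeg ha
  have h := hH.le_degree_add_card_erase hHG hdeg haz.symm
  have hz2 := hcore z hzk
  have hHa : H.degree a ≤ G.degree a := degree_le_of_le hHG
  have hGa := hdeg a
  by_cases hak : G.degree a = k
  · rw [card_erase_of_mem (by simp [hHG haz.symm, hak])] at h
    omega
  · have := card_erase_le (s := {w ∈ G.neighborFinset z | G.degree w = k}) (a := a)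
    omega

lemma IsEdgeCritical.support_eq_univ (hconn : G.Connected) : H.support = Set.univ := by
  have hclosed : ∀ a b, a ∈ H.support → G.Adj a b → b ∈ H.support := by
    intro a b ha hab
    have hN : H.neighborFinset a = G.neighborFinset a := by
      refine eq_of_subset_of_card_le (fun w hw => ?_) ?_
      · simpa using hHG (by simpa using hw)
      · simp [card_neighborFinset_eq_degree, hH.degree_eq_of_mem_support hHG hdeg hcore ha]
    have hab' : H.Adj a b := by rw [← mem_neighborFinset, hN, mem_neighborFinset]; exact hab
    exact hab'.symm.mem_support_left
  obtain ⟨x, y, hxy⟩ := hH.exists_adj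
  refine Set.eq_univ_of_forall fun v => by_contra fun hv => ?_
  obtain ⟨d, -, hd, hd'⟩ := (hconn.preconnected x v).some.exists_boundary_dart _
    hxy.mem_support_left hv
  exact hd' (hclosed _ _ hd d.adj)

end Subgraph

end Critical

open Classical in
theorem stmt_5_general {V : Type*} [Fintype V] (G : SimpleGraph V) (hconn : G.Connected)
    (hclass2b : ¬ EdgeColorable G G.maxDegree)
    (hcore : ∀ v, (G.induce {v : V | G.degree v = G.maxDegree}).degree v ≤ 2) :
    (G.induce {v : V | G.degree v = G.maxDegree}).IsRegularOfDegree 2 := by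
  have hcore' : ∀ z, G.degree z = G.maxDegree →
      #{w ∈ G.neighborFinset z | G.degree w = G.maxDegree} ≤ 2 := fun z hz => by
    simpa [degree_induce_eq_card_filter] using hcore ⟨z, hz⟩
  obtain ⟨H, hHG, hH⟩ := exists_isEdgeCritical_le hclass2b
  have hsupp := hH.support_eq_univ hHG G.degree_le_maxDegree hcore' hconn
  intro v
  rw [degree_induce_eq_card_filter]
  exact le_antisymm (by simpa using hcore' v v.2)
    (by simpa using hH.two_le_card_filter hHG G.degree_le_maxDegree (hsupp ▸ Set.mem_univ v.1))

open Classical in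
theorem stmt_5 {V : Type*} [Fintype V] (G : SimpleGraph V) (hconn : G.Connected)
    (hclass2a : EdgeColorable G (G.maxDegree + 1))
    (hclass2b : ¬ EdgeColorable G G.maxDegree)
    (hcore : ∀ v, (G.induce {v : V | G.degree v = G.maxDegree}).degree v ≤ 2) :
    (G.induce {v : V | G.degree v = G.maxDegree}).IsRegularOfDegree 2 :=
  stmt_5_general G hconn hclass2b hcore
end
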